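/- Let Φ be as given. Then Φ(x) = Φ(1/x) for every x > 0. -/

import Mathlib

open Set

/-- Constancy on `Ioi 0` from vanishing derivative. -/
lemma conifold_const_aux (f g : ℝ → ℝ)
    (hf : ∀ x ∈ Ioi (0:ℝ), HasDerivAt f (g x) x)
    (hg : ∀ x ∈ Ioi (0:ℝ), g x = 0) :
    ∀ x ∈ Ioi (0:ℝ), f x = f 1 := by
  intro x hx
  have h1 : (1:ℝ) ∈ Ioi (0:ℝ) := by norm_num
  have hb := (convex_Ioi (0:ℝ)).norm_image_sub_le_of_norm_hasDerivWithin_le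
    (f' := g) (C := 0) (fun y hy => (hf y hy).hasDerivWithinAt)
    (fun y hy => by simp [hg y hy]) h1 hx
  simp only [zero_mul] at hb
  have : ‖f x - f 1‖ = 0 := le_antisymm hb (norm_nonneg _)
  have := norm_eq_zero.mp this
  linarith [sub_eq_zero.mp this]

/-- Let `Φ : (0,∞) → ℝ` be twice continuously differentiable with
`x²·Φ''(x) + x·Φ'(x) = x/(1 − x + x²)` for all `x > 0` and `Φ(1) = Φ'(1) = 0`.
Then `Φ(x) = Φ(1/x)` for every `x > 0`. -/
theorem conifold_stmt0 (Φ Φ' Φ'' : ℝ → ℝ)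
    (hΦ' : ∀ x ∈ Ioi (0:ℝ), HasDerivAt Φ (Φ' x) x)
    (hΦ'' : ∀ x ∈ Ioi (0:ℝ), HasDerivAt Φ' (Φ'' x) x)
    (hcont : ContinuousOn Φ'' (Ioi (0:ℝ)))
    (hode : ∀ x ∈ Ioi (0:ℝ), x ^ 2 * Φ'' x + x * Φ' x = x / (1 - x + x ^ 2))
    (h1 : Φ 1 = 0) (h1' : Φ' 1 = 0) :
    ∀ x ∈ Ioi (0:ℝ), Φ x = Φ (1 / x) := by
  have hd : ∀ y : ℝ, (1 - y + y ^ 2) ≠ 0 := by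
    intro y
    nlinarith [sq_nonneg (y - 1/2)]
  -- H y = y * Φ' y has derivative 1/(1 - y + y^2) on Ioi 0
  have hH : ∀ y ∈ Ioi (0:ℝ), HasDerivAt (fun y => y * Φ' y)
      (1 / (1 - y + y ^ 2)) y := by
    intro y hy
    have hy0 : y ≠ 0 := ne_of_gt hy
    have hder := (hasDerivAt_id y).mul (hΦ'' y hy)
    have key : 1 * Φ' y + id y * Φ'' y = 1 / (1 - y + y ^ 2) := by
      have h := hode y hy
      have h2 : y * (1 * Φ' y + id y * Φ'' y) = y * (1 / (1 - y + y ^ 2)) := by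
        simp only [id]
        rw [mul_one_div]
        linear_combination h
      exact mul_left_cancel₀ hy0 h2
    rw [key] at hder
    exact hder
  -- invs stay in Ioi 0
  have hinvmem : ∀ x ∈ Ioi (0:ℝ), x⁻¹ ∈ Ioi (0:ℝ) := fun x hx => Set.mem_Ioi.mpr (inv_pos.mpr hx)
  -- F x = x * Φ' x + x⁻¹ * Φ' x⁻¹ has derivative 0
  have hFder : ∀ x ∈ Ioi (0:ℝ),
      HasDerivAt (fun x => x * Φ' x + x⁻¹ * Φ' x⁻¹)
        (1 / (1 - x + x ^ 2) + (1 / (1 - x⁻¹ + (x⁻¹) ^ 2)) * (-(x ^ 2)⁻¹)) x := by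
    intro x hx
    have hx0 : x ≠ 0 := ne_of_gt hx
    have hinner := hasDerivAt_inv hx0
    have hcomp := (hH x⁻¹ (hinvmem x hx)).comp x hinner
    exact (hH x hx).add hcomp
  have hFder0 : ∀ x ∈ Ioi (0:ℝ),
      1 / (1 - x + x ^ 2) + (1 / (1 - x⁻¹ + (x⁻¹) ^ 2)) * (-(x ^ 2)⁻¹) = 0 := by
    intro x hx
    have hx0 : x ≠ 0 := ne_of_gt hx
    have hd1 := hd x
    have hrw : 1 - x⁻¹ + (x⁻¹) ^ 2 = (1 - x + x ^ 2) / x ^ 2 := by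
      field_simp
      ring
    rw [hrw, one_div_div]
    field_simp
    ring
  have hF0 : ∀ x ∈ Ioi (0:ℝ), x * Φ' x + x⁻¹ * Φ' x⁻¹ = 0 := by
    intro x hx
    have := conifold_const_aux _ _ hFder hFder0 x hx
    simpa [h1'] using this
  -- G x = Φ x - Φ x⁻¹ has derivative 0
  have hGder : ∀ x ∈ Ioi (0:ℝ),
      HasDerivAt (fun x => Φ x - Φ x⁻¹) (Φ' x - Φ' x⁻¹ * (-(x ^ 2)⁻¹)) x := by
    intro x hx
    have hx0 : x ≠ 0 := ne_of_gt hx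
    exact (hΦ' x hx).sub ((hΦ' x⁻¹ (hinvmem x hx)).comp x (hasDerivAt_inv hx0))
  have hGder0 : ∀ x ∈ Ioi (0:ℝ), Φ' x - Φ' x⁻¹ * (-(x ^ 2)⁻¹) = 0 := by
    intro x hx
    have hx0 : x ≠ 0 := ne_of_gt hx
    have hF := hF0 x hx
    field_simp at hF ⊢
    linarith
  intro x hx
  have := conifold_const_aux _ _ hGder hGder0 x hx
  simp only [inv_one, h1, sub_zero] at this
  rw [one_div]
  linarith
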